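/- arXiv:2111.02183 — 4 statements merged into one kernel-verified Lean document; each statement's English description precedes it below -/
import Mathlib

section
/- Let k be a natural number, let p₁,…,p_k be distinct primes and n = p₁⋯p_k. Then the k-dprime divisor function graph Γ_k has exactly 3^k − 2^k edges. -/
/-!
Orienting every edge from the smaller divisor to the larger one, the edges of `Γ_k` are the pairs
`(d, v)` with `v ∣ n` and `d` a proper divisor of `v`, so their number is
`∑_{v ∣ n} τ(v) - τ(n)`. Both `τ` and `v ↦ ∑_{d ∣ v} τ(d)` are multiplicative, taking the values
`2` and `3` at a prime, which gives `3^k - 2^k` for a product of `k` distinct primes.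
-/

/-- The `k`-dprime divisor function graph on the positive divisors of `n`:
two distinct divisors `u`, `v` are adjacent iff `u ∣ v` or `v ∣ u`. -/
def divisorGraph (n : ℕ) : SimpleGraph {d : ℕ // d ∈ n.divisors} where
  Adj u v := u ≠ v ∧ ((u : ℕ) ∣ (v : ℕ) ∨ (v : ℕ) ∣ (u : ℕ))
  symm := ⟨fun _ _ ⟨h, hd⟩ => ⟨h.symm, hd.symm⟩⟩
  loopless := ⟨fun _ ⟨h, _⟩ => h rfl⟩

instance (n : ℕ) : DecidableRel (divisorGraph n).Adj :=
  fun _ _ => instDecidableAnd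

open Finset
open scoped ArithmeticFunction.zeta ArithmeticFunction.sigma

theorem SimpleGraph.card_edgeFinset_eq_card_filter_of_adj_iff {V : Type*} [Fintype V]
    [DecidableEq V] (G : SimpleGraph V) [DecidableRel G.Adj] (r : V → V → Prop)
    [DecidableRel r] (hr : ∀ u v, G.Adj u v ↔ r u v ∨ r v u) (hasymm : ∀ u v, r u v → ¬ r v u) :
    #G.edgeFinset = #{x : V × V | r x.1 x.2} := by
  symm
  refine card_bij (fun x _ => s(x.1, x.2)) (fun x hx => ?_) (fun x hx y hy hxy => ?_)
    fun e he => ?_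
  · simp only [mem_filter_univ] at hx
    simpa [hr] using Or.inl hx
  · simp only [mem_filter_univ] at hx hy
    rcases Sym2.eq_iff.1 hxy with ⟨h1, h2⟩ | ⟨h1, h2⟩
    · exact Prod.ext h1 h2
    · exact absurd (h1 ▸ h2 ▸ hy) (hasymm _ _ hx)
  · induction e using Sym2.ind with
    | _ u v =>
      rcases (hr u v).1 (SimpleGraph.mem_edgeFinset.1 he) with h | h
      · exact ⟨(u, v), by simpa using h, rfl⟩
      · exact ⟨(v, u), by simpa using h, Sym2.eq_swap⟩

theorem card_edgeFinset_divisorGraph {n : ℕ} (hn : n ≠ 0) :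
    #(divisorGraph n).edgeFinset = ∑ v ∈ n.divisors, #v.properDivisors := by
  rw [(divisorGraph n).card_edgeFinset_eq_card_filter_of_adj_iff
    (fun u v => u ≠ v ∧ (u : ℕ) ∣ v) (fun u v => ?_) (fun u v huv hvu => ?_)]
  · rw [card_filter, Fintype.sum_prod_type_right, ← sum_coe_sort n.divisors]
    refine Fintype.sum_congr _ _ fun v => ?_
    rw [← card_filter, ← card_map (Function.Embedding.subtype _)]
    congr 1
    ext u
    simp only [mem_map, mem_filter_univ, Function.Embedding.subtype_apply, Subtype.exists,
      exists_and_right, exists_eq_right, Nat.mem_properDivisors]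
    have hv : (v : ℕ) ∣ n := Nat.dvd_of_mem_divisors v.2
    constructor
    · rintro ⟨⟨_, hne⟩, hd⟩
      exact ⟨hd, (Nat.le_of_dvd (Nat.pos_of_dvd_of_pos hv (Nat.pos_of_ne_zero hn)) hd).lt_of_ne
        fun h => hne (Subtype.ext h)⟩
    · rintro ⟨hd, hlt⟩
      exact ⟨⟨Nat.mem_divisors.2 ⟨hd.trans hv, hn⟩, fun h => hlt.ne (congrArg Subtype.val h)⟩, hd⟩
  · change u ≠ v ∧ _ ↔ _
    rw [and_or_left, ne_comm (a := v)]
  · exact huv.1 (Subtype.ext (Nat.dvd_antisymm huv.2 hvu.2))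

theorem sum_card_divisors_divisors (n : ℕ) :
    ∑ v ∈ n.divisors, #v.divisors = ∑ v ∈ n.divisors, #v.properDivisors + #n.divisors := by
  rw [card_eq_sum_ones n.divisors, ← sum_add_distrib]
  refine sum_congr rfl fun v hv => ?_
  rw [← Nat.cons_self_properDivisors (Nat.pos_of_mem_divisors hv).ne', card_cons]

theorem Nat.Prime.card_divisors {p : ℕ} (hp : p.Prime) : #p.divisors = 2 := by
  rw [hp.divisors, card_pair hp.one_lt.ne]

namespace ArithmeticFunction

theorem IsMultiplicative.map_prod_primes {R : Type*} [CommMonoidWithZero R]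
    {f : ArithmeticFunction R} (hf : f.IsMultiplicative) {ι : Type*} [Fintype ι] {p : ι → ℕ}
    (hp : ∀ i, (p i).Prime) (hinj : Function.Injective p) : f (∏ i, p i) = ∏ i, f (p i) :=
  hf.map_prod p univ fun i _ j _ hij => (Nat.coprime_primes (hp i) (hp j)).2 (hinj.ne hij)

theorem zeta_mul_sigma_zero_apply_prime {p : ℕ} (hp : p.Prime) : (ζ * σ 0) p = 3 := by
  rw [zeta_mul_apply, hp.divisors, sum_pair hp.one_lt.ne, sigma_zero_apply, sigma_zero_apply,
    Nat.divisors_one, card_singleton, hp.card_divisors]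

end ArithmeticFunction

open ArithmeticFunction in
theorem stmt_4 (k : ℕ) (p : Fin k → ℕ) (hp : ∀ i, (p i).Prime)
    (hinj : Function.Injective p) (n : ℕ) (hn : n = ∏ i, p i) :
    (divisorGraph n).edgeFinset.card = 3 ^ k - 2 ^ k := by
  have hn0 : n ≠ 0 := hn ▸ prod_ne_zero_iff.2 fun i _ => (hp i).ne_zero
  have hcard : #n.divisors = 2 ^ k := by
    rw [← sigma_zero_apply, hn, isMultiplicative_sigma.map_prod_primes hp hinj]
    simp [sigma_zero_apply, fun i => (hp i).card_divisors]
  have hsum : ∑ v ∈ n.divisors, #v.divisors = 3 ^ k := by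
    simp_rw [← sigma_zero_apply, ← zeta_mul_apply, hn,
      (isMultiplicative_zeta.mul isMultiplicative_sigma).map_prod_primes hp hinj,
      fun i => zeta_mul_sigma_zero_apply_prime (hp i), prod_const, card_univ, Fintype.card_fin]
  rw [card_edgeFinset_divisorGraph hn0]
  have := sum_card_divisors_divisors n
  omega
end

section
/- Let k be a natural number, let p₁,…,p_k be distinct primes and n = p₁⋯p_k. Then the hyper-Wiener index of the k-dprime divisor function graph Γ_k equals 2^{k−1}·(2^{k+1} + 2^k + 1) − 2·3^k. -/
theorem Finset.sum_sum_add_sum_diag_eq_two_nsmul_sum_sym2 {α M : Type*} [AddCommMonoid M]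
    (s : Finset α) (f : Sym2 α → M) :
    ∑ a ∈ s, ∑ b ∈ s, f s(a, b) + ∑ a ∈ s, f s(a, a) = 2 • ∑ e ∈ s.sym2, f e := by
  induction s using Finset.cons_induction with
  | empty => simp
  | cons a s ha ih =>
    simp only [sum_cons, sym2_cons, sum_disjUnion, sum_map, Sym2.mkEmbedding_apply,
      sum_add_distrib, smul_add, ← ih, Sym2.eq_swap (a := a)]
    abel

theorem Finset.sum_sum_coe_sort {α M : Type*} [AddCommMonoid M] (s : Finset α) (g : α → α → M) :
    ∑ a : s, ∑ b : s, g a b = ∑ a ∈ s, ∑ b ∈ s, g a b :=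
  (Finset.sum_coe_sort s _).trans (Finset.sum_congr rfl fun _ _ => Finset.sum_coe_sort s _)

section ArithmeticFunction

open ArithmeticFunction

theorem ArithmeticFunction.IsMultiplicative.map_prod_primes_s8 {ι R : Type*} [Fintype ι]
    [CommMonoidWithZero R] {f : ArithmeticFunction R} (hf : f.IsMultiplicative) {p : ι → ℕ}
    (hp : ∀ i, (p i).Prime) (hinj : Function.Injective p) :
    f (∏ i, p i) = ∏ i, f (p i) :=
  hf.map_prod p _ fun i _ j _ hij => (Nat.coprime_primes (hp i) (hp j)).2 (hinj.ne hij)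

theorem Nat.card_divisors_prod_primes {ι : Type*} [Fintype ι] {p : ι → ℕ}
    (hp : ∀ i, (p i).Prime) (hinj : Function.Injective p) :
    (∏ i, p i).divisors.card = 2 ^ Fintype.card ι := by
  rw [← sigma_zero_apply, isMultiplicative_sigma.map_prod_primes_s8 hp hinj]
  simp [sigma_zero_apply, (hp _).divisors, Finset.card_pair (hp _).one_lt.ne]

theorem Nat.sum_card_divisors_prod_primes {ι : Type*} [Fintype ι] {p : ι → ℕ}
    (hp : ∀ i, (p i).Prime) (hinj : Function.Injective p) :
    ∑ d ∈ (∏ i, p i).divisors, d.divisors.card = 3 ^ Fintype.card ι := by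
  have hmul := (isMultiplicative_sigma (k := 0)).mul isMultiplicative_zeta
  simp_rw [← sigma_zero_apply, ← mul_zeta_apply, hmul.map_prod_primes_s8 hp hinj, mul_zeta_apply,
    (hp _).sum_divisors, sigma_zero_apply, (hp _).divisors, Finset.card_pair (hp _).one_lt.ne]
  simp

end ArithmeticFunction

section divisorGraph

variable {n : ℕ}

theorem divisorGraph_dist_eq_two (hn : n ≠ 0) {u v : {d : ℕ // d ∈ n.divisors}}
    (huv : ¬ (u : ℕ) ∣ v) (hvu : ¬ (v : ℕ) ∣ u) : (divisorGraph n).dist u v = 2 := by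
  have hne : u ≠ v := by rintro rfl; exact huv dvd_rfl
  let one : {d : ℕ // d ∈ n.divisors} := ⟨1, Nat.one_mem_divisors.2 hn⟩
  have hu : (divisorGraph n).Adj u one :=
    ⟨by rintro rfl; exact huv (one_dvd _), Or.inr (one_dvd _)⟩
  have hv : (divisorGraph n).Adj v one :=
    ⟨by rintro rfl; exact hvu (one_dvd _), Or.inr (one_dvd _)⟩
  have h : (divisorGraph n).edist u v = 2 :=
    SimpleGraph.edist_eq_two_iff.2 ⟨hne, fun h => h.2.elim huv hvu, one, hu, hv⟩
  simp [SimpleGraph.dist, h]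

theorem divisorGraph_dist_add_ite_dvd_add_ite_dvd (hn : n ≠ 0)
    (u v : {d : ℕ // d ∈ n.divisors}) :
    (divisorGraph n).dist u v + (if (u : ℕ) ∣ v then 1 else 0) + (if (v : ℕ) ∣ u then 1 else 0)
      = 2 := by
  by_cases huv : u = v
  · subst huv; simp
  have hadj (h : (u : ℕ) ∣ v ∨ (v : ℕ) ∣ u) : (divisorGraph n).dist u v = 1 :=
    SimpleGraph.dist_eq_one_iff_adj.2 ⟨huv, h⟩
  by_cases h₁ : (u : ℕ) ∣ v <;> by_cases h₂ : (v : ℕ) ∣ u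
  · exact absurd (Subtype.ext (Nat.dvd_antisymm h₁ h₂)) huv
  · simp [h₁, h₂, hadj (.inl h₁)]
  · simp [h₁, h₂, hadj (.inr h₂)]
  · simp [h₁, h₂, divisorGraph_dist_eq_two hn h₁ h₂]

theorem divisorGraph_dist_add_sq (hn : n ≠ 0) (u v : {d : ℕ // d ∈ n.divisors}) :
    ((divisorGraph n).dist u v : ℚ) + (divisorGraph n).dist u v ^ 2 =
      6 - 4 * (if (u : ℕ) ∣ v then 1 else 0) - 4 * (if (v : ℕ) ∣ u then 1 else 0)
        + 2 * (if (u : ℕ) = v then 1 else 0) := by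
  have h := divisorGraph_dist_add_ite_dvd_add_ite_dvd hn u v
  by_cases huv : (u : ℕ) = v
  · obtain rfl := Subtype.ext huv
    norm_num
  by_cases h₁ : (u : ℕ) ∣ v <;> by_cases h₂ : (v : ℕ) ∣ u <;>
    simp only [h₁, h₂, huv, if_true, if_false] at h ⊢
  · exact absurd (Nat.dvd_antisymm h₁ h₂) huv
  · norm_num [show (divisorGraph n).dist u v = 1 by omega]
  · norm_num [show (divisorGraph n).dist u v = 1 by omega]
  · norm_num [show (divisorGraph n).dist u v = 2 by omega]

theorem divisorGraph_sum_sum_dist_add_sq (hn : n ≠ 0) :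
    ∑ u, ∑ v, (((divisorGraph n).dist u v : ℚ) + (divisorGraph n).dist u v ^ 2) =
      6 * (n.divisors.card : ℚ) ^ 2 - 8 * ∑ d ∈ n.divisors, (d.divisors.card : ℚ)
        + 2 * n.divisors.card := by
  have hdvd (b) (hb : b ∈ n.divisors) :
      ∑ a ∈ n.divisors, (if a ∣ b then (1 : ℚ) else 0) = b.divisors.card := by
    rw [Finset.sum_boole, Nat.divisors_filter_dvd_of_dvd hn (Nat.dvd_of_mem_divisors hb)]
  simp_rw [divisorGraph_dist_add_sq hn]
  refine (Finset.sum_sum_coe_sort n.divisors fun a b =>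
    6 - 4 * (if a ∣ b then (1 : ℚ) else 0) - 4 * (if b ∣ a then 1 else 0)
      + 2 * (if a = b then 1 else 0)).trans ?_
  simp only [Finset.sum_add_distrib, Finset.sum_sub_distrib, ← Finset.mul_sum]
  rw [Finset.sum_comm (f := fun a b => if a ∣ b then (1 : ℚ) else 0), Finset.sum_congr rfl hdvd]
  simp only [Finset.sum_ite_eq, Finset.sum_ite_mem, Finset.inter_self, Finset.sum_const,
    nsmul_eq_mul]
  ring

end divisorGraph

/-- The hyper-Wiener index: half the sum of `d(u,v) + d(u,v)^2` over all unordered pairs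
of vertices (pairs `{u,u}` contribute `0`). -/
theorem stmt_8 (k : ℕ) (p : Fin k → ℕ) (hp : ∀ i, (p i).Prime)
    (hinj : Function.Injective p) (n : ℕ) (hn : n = ∏ i, p i) :
    (1 / 2 : ℚ) * ∑ e ∈ (Finset.univ : Finset {d : ℕ // d ∈ n.divisors}).sym2,
      Sym2.lift ⟨fun u v => ((divisorGraph n).dist u v : ℚ) + ((divisorGraph n).dist u v : ℚ) ^ 2,
        fun u v => by beta_reduce; rw [SimpleGraph.dist_comm]⟩ e =
      (2 : ℚ) ^ ((k : ℤ) - 1) * (2 ^ (k + 1) + 2 ^ k + 1) - 2 * 3 ^ k := by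
  have hn0 : n ≠ 0 := hn ▸ Finset.prod_ne_zero_iff.2 fun i _ => (hp i).ne_zero
  have hsym := Finset.sum_sum_add_sum_diag_eq_two_nsmul_sum_sym2 Finset.univ (Sym2.lift
    ⟨fun u v => ((divisorGraph n).dist u v : ℚ) + ((divisorGraph n).dist u v : ℚ) ^ 2,
      fun u v => by beta_reduce; rw [SimpleGraph.dist_comm]⟩)
  simp only [Sym2.lift_mk, SimpleGraph.dist_self, CharP.cast_eq_zero, nsmul_eq_mul, ne_eq,
    OfNat.ofNat_ne_zero, not_false_eq_true, zero_pow, Finset.sum_const_zero, add_zero,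
    divisorGraph_sum_sum_dist_add_sq hn0] at hsym
  have hcard : (n.divisors.card : ℚ) = 2 ^ k := by
    simp [hn, Nat.card_divisors_prod_primes hp hinj]
  have hsum : ∑ d ∈ n.divisors, (d.divisors.card : ℚ) = 3 ^ k := by
    simp [hn, ← Nat.cast_sum, Nat.sum_card_divisors_prod_primes hp hinj]
  rw [hcard, hsum] at hsym
  rw [zpow_sub_one₀ two_ne_zero, zpow_natCast]
  linear_combination (-1 / 4 : ℚ) * hsym
end

section
/- Let k ≥ 1, let p₁,…,p_k be distinct primes and n = p₁⋯p_k. Then the first Zagreb index of the k-dprime divisor function graph Γ_k equals 2·(2^k − 1)² + Σ_{j=1}^{k−1} C(k,j)·(2^j + 2^{k−j} − 2)², where C(k,j) is the binomial coefficient. -/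
open Finset

namespace Nat

theorem card_filter_dvd_divisors {d n : ℕ} (hdn : d ∣ n) (hn : n ≠ 0) :
    #{u ∈ n.divisors | d ∣ u} = #(n / d).divisors := by
  have hd : d ≠ 0 := ne_zero_of_dvd_ne_zero hn hdn
  have himage : {u ∈ n.divisors | d ∣ u} = (n / d).divisors.image (d * ·) := by
    ext u
    simp only [mem_filter, mem_image, mem_divisors]
    constructor
    · rintro ⟨⟨hun, -⟩, e, rfl⟩
      exact ⟨e, ⟨dvd_div_of_mul_dvd hun, (div_ne_zero_iff_of_dvd hdn).2 ⟨hn, hd⟩⟩, rfl⟩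
    · rintro ⟨e, ⟨hen, -⟩, rfl⟩
      exact ⟨⟨(dvd_div_iff_mul_dvd hdn).1 hen, hn⟩, dvd_mul_right d e⟩
  rw [himage, Finset.card_image_of_injective _ (mul_right_injective₀ hd)]

theorem card_divisors_filter_dvd_or_dvd {d n : ℕ} (hd : d ∈ n.divisors) :
    #{u ∈ n.divisors | u ∣ d ∨ d ∣ u} = #d.divisors + #(n / d).divisors - 1 := by
  obtain ⟨hdn, hn⟩ := mem_divisors.1 hd
  have hunion : {u ∈ n.divisors | u ∣ d ∨ d ∣ u} = d.divisors ∪ {u ∈ n.divisors | d ∣ u} := by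
    rw [filter_or, divisors_filter_dvd_of_dvd hn hdn]
  have hinter : d.divisors ∩ {u ∈ n.divisors | d ∣ u} = {d} := by
    ext u
    simp only [mem_inter, mem_filter, mem_divisors, mem_singleton]
    exact ⟨fun ⟨⟨hud, _⟩, _, hdu⟩ => dvd_antisymm hud hdu,
      by rintro rfl; exact ⟨⟨dvd_rfl, ne_zero_of_dvd_ne_zero hn hdn⟩, ⟨hdn, hn⟩, dvd_rfl⟩⟩
  have := card_union_add_card_inter d.divisors {u ∈ n.divisors | d ∣ u}
  rw [← hunion, hinter, card_singleton, card_filter_dvd_divisors hdn hn] at this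
  omega

theorem card_divisors_of_squarefree {n : ℕ} (hn : Squarefree n) :
    #n.divisors = 2 ^ #n.primeFactors := by
  rw [card_divisors hn.ne_zero, ← prod_const]
  exact prod_congr rfl fun p hp => by
    rw [factorization_eq_one_of_squarefree hn (prime_of_mem_primeFactors hp)
      (dvd_of_mem_primeFactors hp)]

theorem sum_divisors_of_squarefree {M : Type*} [AddCommMonoid M] {n : ℕ} (hn : Squarefree n)
    (f : ℕ → M) : ∑ d ∈ n.divisors, f d = ∑ t ∈ n.primeFactors.powerset, f (∏ p ∈ t, p) := by
  rw [← divisors_filter_squarefree_of_squarefree hn, sum_divisors_filter_squarefree hn.ne_zero,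
    factors_eq, List.toFinset_coe, toFinset_factors]
  simp only [prod_val, id]

theorem squarefree_prod_primes {s : Finset ℕ} (hs : ∀ p ∈ s, p.Prime) :
    Squarefree (∏ p ∈ s, p) :=
  s.squarefree_prod_of_pairwise_isCoprime
    (fun p hp q hq hne => coprime_iff_isRelPrime.1 ((coprime_primes (hs p hp) (hs q hq)).2 hne))
    fun p hp => (hs p hp).squarefree

theorem card_divisors_prod_primes_s10 {s : Finset ℕ} (hs : ∀ p ∈ s, p.Prime) :
    #(∏ p ∈ s, p).divisors = 2 ^ #s := by
  rw [card_divisors_of_squarefree (squarefree_prod_primes hs), primeFactors_prod hs]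

end Nat

open Nat

theorem divisorGraph_degree {n : ℕ} (v : {d : ℕ // d ∈ n.divisors}) :
    (divisorGraph n).degree v = #(v : ℕ).divisors + #(n / v).divisors - 2 := by
  have hneighbors : ((divisorGraph n).neighborFinset v).map (Function.Embedding.subtype _) =
      ({u ∈ n.divisors | u ∣ (v : ℕ) ∨ (v : ℕ) ∣ u}).erase v := by
    ext u
    simp only [mem_map, SimpleGraph.mem_neighborFinset, mem_erase, mem_filter,
      Function.Embedding.coe_subtype]
    constructor
    · rintro ⟨u, ⟨hne, hdvd⟩, rfl⟩
      exact ⟨fun h => hne (Subtype.ext h.symm), u.2, hdvd.symm⟩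
    · rintro ⟨hne, hu, hdvd⟩
      exact ⟨⟨u, hu⟩, ⟨fun h => hne (congrArg Subtype.val h).symm, hdvd.symm⟩, rfl⟩
  rw [← SimpleGraph.card_neighborFinset_eq_degree, ← card_map, hneighbors,
    card_erase_of_mem (by simp [v.2]), card_divisors_filter_dvd_or_dvd v.2]
  omega

theorem sum_degree_sq_divisorGraph_of_squarefree {n : ℕ} (hn : Squarefree n) :
    ∑ v, (divisorGraph n).degree v ^ 2 =
      ∑ j ∈ range (#n.primeFactors + 1),
        (#n.primeFactors).choose j * (2 ^ j + 2 ^ (#n.primeFactors - j) - 2) ^ 2 := by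
  set k := #n.primeFactors
  have hcard {t : Finset ℕ} (ht : t ∈ n.primeFactors.powerset) :
      #(∏ p ∈ t, p).divisors + #(n / ∏ p ∈ t, p).divisors = 2 ^ #t + 2 ^ (k - #t) := by
    rw [mem_powerset] at ht
    rw [← prod_primeFactors_sdiff_of_squarefree hn ht,
      card_divisors_prod_primes_s10 fun p hp => prime_of_mem_primeFactors (ht hp),
      card_divisors_prod_primes_s10 fun p hp => prime_of_mem_primeFactors (mem_sdiff.1 hp).1,
      card_sdiff_of_subset ht]
  calc ∑ v, (divisorGraph n).degree v ^ 2
      = ∑ d ∈ n.divisors, (#d.divisors + #(n / d).divisors - 2) ^ 2 := by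
        rw [← sum_coe_sort n.divisors]
        simp only [divisorGraph_degree]
    _ = ∑ t ∈ n.primeFactors.powerset, (2 ^ #t + 2 ^ (k - #t) - 2) ^ 2 := by
        rw [sum_divisors_of_squarefree hn]
        exact sum_congr rfl fun t ht => by rw [hcard ht]
    _ = _ := by
        rw [sum_powerset_apply_card (fun j => (2 ^ j + 2 ^ (k - j) - 2) ^ 2)
          (x := n.primeFactors)]
        rfl

theorem sum_range_choose_mul_sq_eq_ends_add_sum_Ico (k : ℕ) :
    ∑ j ∈ range (k + 1), k.choose j * (2 ^ j + 2 ^ (k - j) - 2) ^ 2 =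
      2 * (2 ^ k - 1) ^ 2 + ∑ j ∈ Ico 1 k, k.choose j * (2 ^ j + 2 ^ (k - j) - 2) ^ 2 := by
  rcases k.eq_zero_or_pos with rfl | hk
  · simp
  have h2k : 1 ≤ 2 ^ k := Nat.one_le_two_pow
  rw [sum_range_succ, range_eq_Ico, sum_eq_sum_Ico_succ_bot hk]
  simp only [choose_zero_right, choose_self, pow_zero, Nat.sub_zero, Nat.sub_self, one_mul]
  rw [add_comm (2 ^ k) 1, show 1 + 2 ^ k - 2 = 2 ^ k - 1 by omega]
  ring

theorem stmt_10_general (k : ℕ) (p : Fin k → ℕ) (hp : ∀ i, (p i).Prime)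
    (hinj : Function.Injective p) (n : ℕ) (hn : n = ∏ i, p i) :
    ∑ v : {d : ℕ // d ∈ n.divisors}, (divisorGraph n).degree v ^ 2 =
      2 * (2 ^ k - 1) ^ 2 +
        ∑ j ∈ Finset.Ico 1 k, Nat.choose k j * (2 ^ j + 2 ^ (k - j) - 2) ^ 2 := by
  have hprimes : ∀ q ∈ univ.image p, q.Prime := by simpa using hp
  replace hn : n = ∏ q ∈ univ.image p, q := by rw [hn, prod_image hinj.injOn]
  have hω : #n.primeFactors = k := by
    rw [hn, primeFactors_prod hprimes, card_image_of_injective _ hinj, Finset.card_fin]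
  rw [sum_degree_sq_divisorGraph_of_squarefree (hn ▸ squarefree_prod_primes hprimes), hω,
    sum_range_choose_mul_sq_eq_ends_add_sum_Ico]

/-- The first Zagreb index: the sum of the squares of the vertex degrees. -/
theorem stmt_10 (k : ℕ) (hk : 1 ≤ k) (p : Fin k → ℕ) (hp : ∀ i, (p i).Prime)
    (hinj : Function.Injective p) (n : ℕ) (hn : n = ∏ i, p i) :
    ∑ v : {d : ℕ // d ∈ n.divisors}, (divisorGraph n).degree v ^ 2 =
      2 * (2 ^ k - 1) ^ 2 +
        ∑ j ∈ Finset.Ico 1 k, Nat.choose k j * (2 ^ j + 2 ^ (k - j) - 2) ^ 2 :=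
  stmt_10_general k p hp hinj n hn
end

section
/- Let p₁, p₂, p₃, p₄ be distinct primes and n = p₁p₂p₃p₄. Then the harmonic index of the 4-dprime divisor function graph Γ₄ equals 36367/4830. -/
/-!
For squarefree `n = ∏ pᵢ`, sending a set `s` of indices to `∏ i ∈ s, pᵢ` is a bijection from
the subsets of the index set onto the divisors of `n` that turns `⊆` into `∣`. Hence `Γ₄` is
the comparability graph of the Boolean lattice of `Fin 4`, whatever the four primes are, and the
harmonic index is an isomorphism invariant; it remains to evaluate it on that one graph.
-/

open Finset Function

namespace SimpleGraph

variable {V W : Type*}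

def harmonicIndex [Fintype V] [DecidableEq V] (G : SimpleGraph V) [DecidableRel G.Adj] : ℚ :=
  ∑ e ∈ G.edgeFinset, Sym2.lift ⟨fun u v => (2 : ℚ) / ((G.degree u : ℚ) + (G.degree v : ℚ)),
    fun _ _ => by simp only [add_comm]⟩ e

theorem Iso.harmonicIndex_eq [Fintype V] [DecidableEq V] [Fintype W] [DecidableEq W]
    {G : SimpleGraph V} {G' : SimpleGraph W} [DecidableRel G.Adj] [DecidableRel G'.Adj]
    (f : G ≃g G') : G.harmonicIndex = G'.harmonicIndex := by
  refine sum_nbij' (Sym2.map f) (Sym2.map f.symm) (fun e he => ?_) (fun e he => ?_)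
    (fun e _ => ?_) (fun e _ => ?_) (fun e _ => ?_)
  · simpa using f.map_mem_edgeSet_iff.mpr (mem_edgeFinset.mp he)
  · simpa using f.symm.map_mem_edgeSet_iff.mpr (mem_edgeFinset.mp he)
  all_goals induction e using Sym2.ind with
    | _ u v => simp

def Iso.fromRel {r : V → V → Prop} {s : W → W → Prop} (e : V ≃ W)
    (he : ∀ u v, s (e u) (e v) ↔ r u v) : fromRel r ≃g fromRel s where
  toEquiv := e
  map_rel_iff' := by simp [fromRel_adj, he]

end SimpleGraph

namespace Nat

variable {ι : Type*} {p : ι → ℕ}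

theorem primeFactors_prod_of_prime [DecidableEq ι] (hp : ∀ i, (p i).Prime) (hp_inj : Injective p)
    (s : Finset ι) : (∏ i ∈ s, p i).primeFactors = s.image p := by
  rw [← prod_image (f := fun q => q) hp_inj.injOn, primeFactors_prod]
  simpa using fun i _ => hp i

theorem squarefree_prod_of_prime (hp : ∀ i, (p i).Prime) (hp_inj : Injective p) (s : Finset ι) :
    Squarefree (∏ i ∈ s, p i) :=
  squarefree_prod_of_pairwise_isCoprime
    (fun i _ j _ hij =>
      coprime_iff_isRelPrime.mp <| (coprime_primes (hp i) (hp j)).mpr (hp_inj.ne hij))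
    fun i _ => (hp i).prime.squarefree

theorem prod_dvd_prod_iff_subset (hp : ∀ i, (p i).Prime) (hp_inj : Injective p)
    {s t : Finset ι} : ∏ i ∈ s, p i ∣ ∏ i ∈ t, p i ↔ s ⊆ t := by
  classical
  refine ⟨fun h => ?_, prod_dvd_prod_of_subset s t p⟩
  have := primeFactors_mono h (prod_ne_zero_iff.mpr fun i _ => (hp i).ne_zero)
  rwa [primeFactors_prod_of_prime hp hp_inj, primeFactors_prod_of_prime hp hp_inj,
    image_subset_image_iff hp_inj] at this

theorem injective_prod_of_prime (hp : ∀ i, (p i).Prime) (hp_inj : Injective p) :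
    Injective fun s : Finset ι => ∏ i ∈ s, p i := fun _ _ h =>
  ((prod_dvd_prod_iff_subset hp hp_inj).mp h.dvd).antisymm
    ((prod_dvd_prod_iff_subset hp hp_inj).mp h.symm.dvd)

theorem exists_prod_eq_of_dvd [Fintype ι] (hp : ∀ i, (p i).Prime) (hp_inj : Injective p) {d : ℕ}
    (hd : d ∣ ∏ i, p i) : ∃ s : Finset ι, ∏ i ∈ s, p i = d := by
  classical
  have hsq : Squarefree d := (squarefree_prod_of_prime hp hp_inj univ).squarefree_of_dvd hd
  refine ⟨univ.filter (p · ∣ d), ?_⟩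
  conv_rhs => rw [← prod_primeFactors_of_squarefree hsq]
  rw [← prod_image (f := fun q => q) hp_inj.injOn]
  congr 1
  ext q
  simp only [mem_image, mem_filter, mem_univ, true_and, mem_primeFactors]
  constructor
  · rintro ⟨i, hi, rfl⟩
    exact ⟨hp i, hi, hsq.ne_zero⟩
  · rintro ⟨hq, hqd, -⟩
    obtain ⟨i, -, hqi⟩ := (hq.prime.dvd_finsetProd_iff _).mp (hqd.trans hd)
    obtain rfl := (prime_dvd_prime_iff_eq hq (hp i)).mp hqi
    exact ⟨i, hqd, rfl⟩

noncomputable def divisorsEquivFinset [Fintype ι] (hp : ∀ i, (p i).Prime) (hp_inj : Injective p) :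
    Finset ι ≃ (∏ i, p i).divisors :=
  Equiv.ofBijective
    (fun s => ⟨∏ i ∈ s, p i, mem_divisors.mpr ⟨prod_dvd_prod_of_subset _ _ _ (subset_univ s),
      prod_ne_zero_iff.mpr fun i _ => (hp i).ne_zero⟩⟩)
    ⟨fun _ _ hst => injective_prod_of_prime hp hp_inj (congrArg Subtype.val hst),
      fun d => (exists_prod_eq_of_dvd hp hp_inj (mem_divisors.mp d.2).1).imp
        fun _ h => Subtype.ext h⟩

end Nat

noncomputable def divisorGraphIsoFinset {ι : Type*} [Fintype ι] {p : ι → ℕ}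
    (hp : ∀ i, (p i).Prime) (hp_inj : Injective p) :
    SimpleGraph.fromRel (V := Finset ι) (· ⊆ ·) ≃g divisorGraph (∏ i, p i) :=
  SimpleGraph.Iso.fromRel (Nat.divisorsEquivFinset hp hp_inj) fun _ _ =>
    Nat.prod_dvd_prod_iff_subset hp hp_inj

/- A set of size `j` has degree `2 ^ j + 2 ^ (4 - j) - 2`, i.e. `15, 8, 6, 8, 15` for
`j = 0, …, 4`; grouping the 65 edges by the sizes of their ends gives
`32/23 + 32/7 + 1/15 + 3/2`. -/
theorem harmonicIndex_fromRel_subset_fin_four :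
    (SimpleGraph.fromRel (V := Finset (Fin 4)) (· ⊆ ·)).harmonicIndex = 36367 / 4830 := by
  decide +kernel

/-- The harmonic index of `Γ₄`: the sum over all edges of `2 / (deg u + deg v)`. -/
theorem stmt_17 (p₁ p₂ p₃ p₄ : ℕ) (hp₁ : p₁.Prime) (hp₂ : p₂.Prime)
    (hp₃ : p₃.Prime) (hp₄ : p₄.Prime)
    (h12 : p₁ ≠ p₂) (h13 : p₁ ≠ p₃) (h14 : p₁ ≠ p₄)
    (h23 : p₂ ≠ p₃) (h24 : p₂ ≠ p₄) (h34 : p₃ ≠ p₄)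
    (n : ℕ) (hn : n = p₁ * p₂ * p₃ * p₄) :
    ∑ e ∈ (divisorGraph n).edgeFinset,
      Sym2.lift ⟨fun u v =>
          (2 : ℚ) / (((divisorGraph n).degree u : ℚ) + ((divisorGraph n).degree v : ℚ)),
        fun u v => by beta_reduce; rw [add_comm (((divisorGraph n).degree u : ℚ))]⟩ e =
      36367 / 4830 := by
  set p : Fin 4 → ℕ := ![p₁, p₂, p₃, p₄]
  have hp : ∀ i, (p i).Prime := by
    simp [p, Fin.forall_fin_succ, hp₁, hp₂, hp₃, hp₄]
  have hp_inj : Injective p := by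
    simp only [p, Matrix.vecCons, Fin.cons_injective_iff]
    simp [h12, h13, h14, h23, h24, h34, Injective]
  obtain rfl : n = ∏ i, p i := by rw [hn, Fin.prod_univ_four]; rfl
  exact (divisorGraphIsoFinset hp hp_inj).harmonicIndex_eq.symm.trans
    harmonicIndex_fromRel_subset_fin_four
end
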